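/- Let k >= 2 and let f(z_1, ..., z_{k+1}) = sum_{r=0}^{k+1} f_r(z_1, ..., z_{k+1}) where each f_r is as defined from the products [z, u; k]_{q^2}. Then sum over sigma in S_{k+1} of sgn(sigma) * f(z_{sigma(1)}, ..., z_{sigma(k+1)}) = 0. -/
import Mathlib

set_option maxHeartbeats 2000000

/-- For `(αᵢ|αⱼ) = -k`, `k ≥ 2`: the signed symmetrization over `S_{k+1}` of
`f = ∑_{r=0}^{k+1} f_r` vanishes, where
`f_r = (∏_{l ≤ r} [z_l, -w q^{-k}]_{q²} [w, z_l q^{-k}]_{q²}) ·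
 (∏_{l > r} [w, -z_l q^{-k}]_{q²} [z_l, w q^{-k}]_{q²})` and
`[z,u;k]_{q²} = ∏_{j<k} (z - u q^{2j})`. -/
theorem serre_sum_antisymmetrization_vanishes
    (K : Type*) [Field K] [CharZero K] (q w : K) (hq : q ≠ 0)
    (k : ℕ) (hk : 2 ≤ k) :
    let br : K → K → K := fun z u => ∏ j ∈ Finset.range k, (z - u * q ^ (2 * j))
    let f : (Fin (k + 1) → K) → K := fun z =>
      ∑ r ∈ Finset.range (k + 2),
        ∏ l : Fin (k + 1),
          if (l : ℕ) < r then br (z l) (-(w * q⁻¹ ^ k)) * br w (z l * q⁻¹ ^ k)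
          else br w (-(z l * q⁻¹ ^ k)) * br (z l) (w * q⁻¹ ^ k)
    ∀ z : Fin (k + 1) → K,
      ∑ σ : Equiv.Perm (Fin (k + 1)), (Equiv.Perm.sign σ : ℤ) • f (z ∘ σ) = 0 := by
  intro br f z
  -- key lemma: signed sum vanishes for any F invariant under a transposition τ
  have key : ∀ (F : Fin (k+1) → K → K) (τ : Equiv.Perm (Fin (k+1))),
      Equiv.Perm.sign τ = -1 →
      (∀ l x, F (τ l) x = F l x) →
      ∑ σ : Equiv.Perm (Fin (k+1)), (Equiv.Perm.sign σ : ℤ) • ∏ l, F l (z (σ l)) = 0 := by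
    intro F τ hτ hF
    set S := ∑ σ : Equiv.Perm (Fin (k+1)), (Equiv.Perm.sign σ : ℤ) • ∏ l, F l (z (σ l)) with hS
    have hP : ∀ σ : Equiv.Perm (Fin (k+1)),
        (∏ l, F l (z ((σ * τ) l))) = ∏ l, F l (z (σ l)) := by
      intro σ
      calc (∏ l, F l (z ((σ * τ) l))) = ∏ l, F (τ l) (z (σ (τ l))) := by
            refine Finset.prod_congr rfl fun l _ => ?_
            rw [hF, Equiv.Perm.mul_apply]
        _ = ∏ l, F l (z (σ l)) := Equiv.prod_comp τ (fun m => F m (z (σ m)))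
    have hneg : S = -S := by
      calc S = ∑ σ : Equiv.Perm (Fin (k+1)),
            (Equiv.Perm.sign (σ * τ) : ℤ) • ∏ l, F l (z ((σ * τ) l)) :=
          (Equiv.sum_comp (Equiv.mulRight τ)
            (fun σ => (Equiv.Perm.sign σ : ℤ) • ∏ l, F l (z (σ l)))).symm
        _ = -S := by
          rw [hS, ← Finset.sum_neg_distrib]
          refine Finset.sum_congr rfl fun σ _ => ?_
          rw [hP, Equiv.Perm.sign_mul, hτ]
          simp [neg_smul]
    have h2 : (2 : K) * S = 0 := by linear_combination hneg
    exact (mul_eq_zero.mp h2).resolve_left two_ne_zero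
  have hfz : ∀ σ : Equiv.Perm (Fin (k+1)), f (z ∘ σ) =
      ∑ r ∈ Finset.range (k + 2),
        ∏ l, (fun (l : Fin (k+1)) (x : K) =>
          if (l : ℕ) < r then br x (-(w * q⁻¹ ^ k)) * br w (x * q⁻¹ ^ k)
          else br w (-(x * q⁻¹ ^ k)) * br x (w * q⁻¹ ^ k)) l (z (σ l)) := fun σ => rfl
  calc (∑ σ : Equiv.Perm (Fin (k + 1)), (Equiv.Perm.sign σ : ℤ) • f (z ∘ σ))
      = ∑ r ∈ Finset.range (k + 2), ∑ σ : Equiv.Perm (Fin (k + 1)),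
          (Equiv.Perm.sign σ : ℤ) • ∏ l, (fun (l : Fin (k+1)) (x : K) =>
            if (l : ℕ) < r then br x (-(w * q⁻¹ ^ k)) * br w (x * q⁻¹ ^ k)
            else br w (-(x * q⁻¹ ^ k)) * br x (w * q⁻¹ ^ k)) l (z (σ l)) := by
        simp_rw [hfz, Finset.smul_sum]
        exact Finset.sum_comm
    _ = 0 := by
        refine Finset.sum_eq_zero fun r hr => ?_
        rw [Finset.mem_range] at hr
        -- choose two indices a, b on the same side of the cut at r
        obtain ⟨a, b, ha, hb⟩ : ∃ a b : Fin (k+1), (a : ℕ) = (if 2 ≤ r then 0 else k - 1) ∧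
            (b : ℕ) = (if 2 ≤ r then 1 else k) :=
          ⟨⟨if 2 ≤ r then 0 else k - 1, by split <;> omega⟩,
           ⟨if 2 ≤ r then 1 else k, by split <;> omega⟩, rfl, rfl⟩
    
        have hab : a ≠ b := by
          intro h
          rw [h] at ha
          rw [hb] at ha
          split at ha <;> omega
        refine key (fun (l : Fin (k+1)) (x : K) =>
            if (l : ℕ) < r then br x (-(w * q⁻¹ ^ k)) * br w (x * q⁻¹ ^ k)
            else br w (-(x * q⁻¹ ^ k)) * br x (w * q⁻¹ ^ k))
          (Equiv.swap a b) (Equiv.Perm.sign_swap hab) fun l x => ?_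
        have hiff : ((Equiv.swap a b l : Fin (k+1)) : ℕ) < r ↔ (l : ℕ) < r := by
          rcases eq_or_ne l a with h | h
          · subst h
            rw [Equiv.swap_apply_left]
            split at ha <;> split at hb <;> omega
          rcases eq_or_ne l b with h' | h'
          · subst h'
            rw [Equiv.swap_apply_right]
            split at ha <;> split at hb <;> omega
          · rw [Equiv.swap_apply_of_ne_of_ne h h']
        simp only [hiff]
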